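/- arXiv:quant-ph/0007021 — 4 statements merged into one kernel-verified Lean document; each statement's English description precedes it below -/
import Mathlib

section
/- Let F be a family of n-element subsets of an m-element universe such that any two distinct members intersect in at most n/2 elements. Then a maximal such family (obtained greedily) has size at least (m/(4n))^{n/2}, for m ≥ n ≥ 2 (n even). More precisely, binom(m,n) / (binom(n,n/2) * binom(m - n/2, n/2)) ≥ (m/(4n))^{n/2}. -/
/-!
With `k = n / 2`, the identity `C(m,n) C(n,k) = C(m,k) C(m-k,k)` turns the quotient into
`C(m,k) / C(n,k)^2`. The ratio `C(m,k) / C(n,k) = ∏_{i<k} (m-i)/(n-i)` is at least `(m/n)^k`, since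
each factor is at least `m/n`, and the remaining `C(n,k)` is at most `2^n = 4^k`.
-/

namespace Nat

variable {m n : ℕ}

theorem pow_mul_descFactorial_le_pow_mul_descFactorial (hnm : n ≤ m) (k : ℕ) :
    m ^ k * n.descFactorial k ≤ n ^ k * m.descFactorial k := by
  induction k with
  | zero => simp
  | succ k ih =>
    have hfactor : m * (n - k) ≤ n * (m - k) := by
      rcases le_total k n with hkn | hnk
      · have : n * k ≤ m * k := Nat.mul_le_mul_right k hnm
        zify [hkn, hkn.trans hnm]
        nlinarith
      · simp [Nat.sub_eq_zero_of_le hnk]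
    rw [descFactorial_succ, descFactorial_succ, pow_succ, pow_succ]
    calc m ^ k * m * ((n - k) * n.descFactorial k)
        = m * (n - k) * (m ^ k * n.descFactorial k) := by ring
      _ ≤ n * (m - k) * (n ^ k * m.descFactorial k) := Nat.mul_le_mul hfactor ih
      _ = n ^ k * n * ((m - k) * m.descFactorial k) := by ring

theorem pow_mul_choose_le_pow_mul_choose (hnm : n ≤ m) (k : ℕ) :
    m ^ k * n.choose k ≤ n ^ k * m.choose k := by
  have h := pow_mul_descFactorial_le_pow_mul_descFactorial hnm k
  rw [descFactorial_eq_factorial_mul_choose, descFactorial_eq_factorial_mul_choose,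
    mul_left_comm, mul_left_comm (n ^ k)] at h
  exact Nat.le_of_mul_le_mul_left h k.factorial_pos

theorem pow_mul_choose_sub_le_pow_mul_choose {k : ℕ} (hkn : k ≤ n) (hnm : n ≤ m) :
    m ^ k * (m - k).choose (n - k) ≤ n ^ k * m.choose n := by
  refine Nat.le_of_mul_le_mul_left ?_ (choose_pos hkn)
  calc n.choose k * (m ^ k * (m - k).choose (n - k))
      = m ^ k * n.choose k * (m - k).choose (n - k) := by ring
    _ ≤ n ^ k * m.choose k * (m - k).choose (n - k) :=
        Nat.mul_le_mul_right _ (pow_mul_choose_le_pow_mul_choose hnm k)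
    _ = n.choose k * (n ^ k * m.choose n) := by
        rw [mul_assoc, ← choose_mul hkn]
        ring

end Nat

theorem greedy_family_size_bound_general (m n : ℕ) (hne : Even n) (hmn : n ≤ m) :
    ((m / (4 * n) : ℝ)) ^ (n / 2) ≤
      (m.choose n : ℝ) / ((n.choose (n / 2) : ℝ) * ((m - n / 2).choose (n / 2) : ℝ)) := by
  obtain rfl | hn := n.eq_zero_or_pos
  · simp
  set k := n / 2
  have h2k : 2 * k = n := Nat.two_mul_div_two_of_even hne
  have hchoose : n.choose k ≤ 4 ^ k :=
    (Nat.choose_le_two_pow n k).trans_eq (by rw [← h2k, pow_mul]; norm_num)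
  have key : m ^ k * (n.choose k * (m - k).choose k) ≤ m.choose n * (4 * n) ^ k :=
    calc m ^ k * (n.choose k * (m - k).choose k)
        = n.choose k * (m ^ k * (m - k).choose (n - k)) := by
          rw [show n - k = k by omega]; ring
      _ ≤ 4 ^ k * (n ^ k * m.choose n) :=
          Nat.mul_le_mul hchoose (Nat.pow_mul_choose_sub_le_pow_mul_choose (by omega) hmn)
      _ = m.choose n * (4 * n) ^ k := by ring
  have hden : 0 < n.choose k * (m - k).choose k :=
    Nat.mul_pos (Nat.choose_pos (by omega)) (Nat.choose_pos (by omega))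
  rw [div_pow, div_le_div_iff₀ (by positivity) (by exact_mod_cast hden)]
  exact_mod_cast key

theorem greedy_family_size_bound (m n : ℕ) (hn : 2 ≤ n) (hne : Even n) (hmn : n ≤ m) :
    ((m / (4 * n) : ℝ)) ^ (n / 2) ≤
      (m.choose n : ℝ) / ((n.choose (n / 2) : ℝ) * ((m - n / 2).choose (n / 2) : ℝ)) :=
  greedy_family_size_bound_general m n hne hmn
end

section
/- Suppose for each set S in a collection 𝒮 of subsets of [m] of size at most n, there are functions f₁,…,f_m : {0,1}^s → ℝ and strings x(S) ∈ {0,1}^s such that f_i(x(S)) = 1 if i ∈ S and f_i(x(S)) = 0 if i ∉ S. Then the products Φ(S) = ∏_{i∈S} f_i (with Φ(∅) = 1), as functions on {0,1}^s, are linearly independent over ℝ. -/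
theorem products_linearIndependent (m n s : ℕ)
    (f : Fin m → (Fin s → Bool) → ℝ)
    (x : {S : Finset (Fin m) // S.card ≤ n} → (Fin s → Bool))
    (hcorrect : ∀ S : {S : Finset (Fin m) // S.card ≤ n}, ∀ i : Fin m,
      f i (x S) = if i ∈ S.1 then 1 else 0) :
    LinearIndependent ℝ
      (fun S : {S : Finset (Fin m) // S.card ≤ n} =>
        (fun y : Fin s → Bool => ∏ i ∈ S.1, f i y)) := by
  classical
  rw [Fintype.linearIndependent_iff]
  intro g hg
  have key : ∀ S : {S : Finset (Fin m) // S.card ≤ n},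
      ∑ T : {S : Finset (Fin m) // S.card ≤ n},
        (if T.1 ⊆ S.1 then g T else 0) = 0 := by
    intro S
    have h := congrFun hg (x S)
    simp only [Finset.sum_apply, Pi.smul_apply, smul_eq_mul, Pi.zero_apply] at h
    refine Eq.trans (Finset.sum_congr rfl ?_) h
    intro T _
    by_cases hTS : T.1 ⊆ S.1
    · rw [if_pos hTS]
      have : ∏ i ∈ T.1, f i (x S) = 1 := by
        apply Finset.prod_eq_one
        intro i hi
        rw [hcorrect, if_pos (hTS hi)]
      rw [this, mul_one]
    · rw [if_neg hTS]
      obtain ⟨i, hiT, hiS⟩ := Finset.not_subset.mp hTS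
      have : ∏ i ∈ T.1, f i (x S) = 0 :=
        Finset.prod_eq_zero hiT (by rw [hcorrect, if_neg hiS])
      rw [this, mul_zero]
  have main : ∀ k (S : {S : Finset (Fin m) // S.card ≤ n}), S.1.card = k → g S = 0 := by
    intro k
    induction k using Nat.strong_induction_on with
    | _ k ih =>
      intro S hS
      have h := key S
      rw [← Finset.sum_filter] at h
      have hSmem : S ∈ Finset.univ.filter (fun T : {S : Finset (Fin m) // S.card ≤ n} => T.1 ⊆ S.1) := by
        simp
      rw [← Finset.add_sum_erase _ _ hSmem] at h
      have hz : ∑ T ∈ (Finset.univ.filter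
          (fun T : {S : Finset (Fin m) // S.card ≤ n} => T.1 ⊆ S.1)).erase S, g T = 0 := by
        apply Finset.sum_eq_zero
        intro T hT
        obtain ⟨hTne, hTmem⟩ := Finset.mem_erase.mp hT
        have hTS : T.1 ⊆ S.1 := by simpa using hTmem
        have hss : T.1 ⊂ S.1 := hTS.ssubset_of_ne (fun hh => hTne (Subtype.ext hh))
        exact ih T.1.card (hS ▸ Finset.card_lt_card hss) T rfl
      rw [hz, add_zero] at h
      exact h
  intro S
  exact main S.1.card S rfl
end

section
/- Classical deterministic bit-probe lower bound: if there is a deterministic scheme storing every subset S of size at most n of an m-element universe as an s-bit string, answering membership queries with at most t bit probes (each query function computed by a depth-t decision tree on the stored string), then ∑_{i=0}^{n} binom(m,i) ≤ ∑_{i=0}^{nt} binom(s,i). -/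
inductive BDTree (s : ℕ) where
  | leaf : Bool → BDTree s
  | node : Fin s → BDTree s → BDTree s → BDTree s

def BDTree.eval {s : ℕ} : BDTree s → (Fin s → Bool) → Bool
  | .leaf b, _ => b
  | .node i t₀ t₁, x => if x i then t₁.eval x else t₀.eval x

def BDTree.depth {s : ℕ} : BDTree s → ℕ
  | .leaf _ => 0
  | .node _ t₀ t₁ => max t₀.depth t₁.depth + 1

/-! The indicator of a decision tree of depth `t` is a multilinear polynomial of degree at most
`t` in the probed bits (`f = f₀ + yᵢ (f₁ - f₀)` at a node probing `yᵢ`), so for `|S| ≤ n` the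
product of the query indicators over `q ∈ S` has degree at most `n t`. At the stored string of
`S'` this product equals `[S ⊆ S']`; as `S` varies these functions of `S'` form a triangular,
hence linearly independent, family, and they lie in the image of the polynomials of degree
`≤ n t`, which are spanned by `∑_{i ≤ n t} binom(s, i)` monomials. -/

open Finset Submodule

theorem Fintype.card_finset_card_le (α : Type*) [Fintype α] (k : ℕ) :
    Fintype.card {S : Finset α // #S ≤ k} = ∑ i ∈ range (k + 1), (Fintype.card α).choose i := by
  classical
  rw [Fintype.card_subtype, card_eq_sum_card_fiberwise (f := Finset.card) (t := range (k + 1))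
    (fun S hS => by simpa [Nat.lt_succ_iff] using hS)]
  refine Finset.sum_congr rfl fun i hi => ?_
  rw [← card_univ, ← card_powersetCard, powersetCard_eq_filter, powerset_univ, filter_filter]
  congr 1
  ext S
  simp only [mem_filter, mem_univ, true_and, mem_range] at hi ⊢
  omega

theorem linearIndependent_of_triangular {R ι : Type*} [Ring R] [PartialOrder ι]
    {v : ι → ι → R} (hdiag : ∀ i, IsUnit (v i i)) (htri : ∀ i j, v i j ≠ 0 → i ≤ j) :
    LinearIndependent R v := by
  classical
  rw [linearIndependent_iff']
  intro A c hsum i hiA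
  by_contra hci
  obtain ⟨j, hj, hjmin⟩ := (A.filter (c · ≠ 0)).exists_minimal ⟨i, mem_filter.2 ⟨hiA, hci⟩⟩
  obtain ⟨hjA, hcj⟩ := mem_filter.1 hj
  have hcoord : ∑ k ∈ A, c k * v k j = c j * v j j := by
    refine sum_eq_single_of_mem j hjA fun k hkA hkj => ?_
    by_cases hck : c k = 0
    · rw [hck, zero_mul]
    by_contra hne
    have hkj' : k < j := lt_of_le_of_ne (htri k j (right_ne_zero_of_mul hne)) hkj
    exact hkj'.not_ge (hjmin (mem_filter.2 ⟨hkA, hck⟩) hkj'.le)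
  have := congrFun hsum j
  simp only [Finset.sum_apply, Pi.smul_apply, smul_eq_mul, Pi.zero_apply, hcoord] at this
  exact hcj ((hdiag j).mul_left_eq_zero.1 this)

theorem LinearIndependent.card_le_card_of_mem_span_range {R M ι κ : Type*} [Ring R]
    [StrongRankCondition R] [AddCommGroup M] [Module R M] [Fintype ι] [Fintype κ]
    {v : ι → M} {w : κ → M} (hv : LinearIndependent R v) (hvw : ∀ i, v i ∈ span R (Set.range w)) :
    Fintype.card ι ≤ Fintype.card κ := by
  have : Module.Finite R (span R (Set.range w)) := .span_of_finite R (Set.finite_range w)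
  have hv' : LinearIndependent R fun i => (⟨v i, hvw i⟩ : span R (Set.range w)) :=
    .of_comp (span R (Set.range w)).subtype hv
  exact hv'.fintype_card_le_finrank.trans (finrank_range_le_card w)

section LowDegree

variable (K : Type*) {ι : Type*} [CommRing K]

def boolMonomial (T : Finset ι) : (ι → Bool) → K :=
  fun y => if ∀ i ∈ T, y i then 1 else 0

variable (ι) in
def lowDegree (d : ℕ) : Submodule K ((ι → Bool) → K) :=
  span K (Set.range fun T : {T : Finset ι // #T ≤ d} => boolMonomial K T.1)

variable {K}

theorem boolMonomial_mul [DecidableEq ι] (T U : Finset ι) :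
    boolMonomial K T * boolMonomial K U = boolMonomial K (T ∪ U) := by
  funext y
  simp only [boolMonomial, Pi.mul_apply, ite_zero_mul_ite_zero, forall_mem_union, mul_one]

theorem boolMonomial_mem_lowDegree {T : Finset ι} {d : ℕ} (h : #T ≤ d) :
    boolMonomial K T ∈ lowDegree K ι d :=
  subset_span ⟨⟨T, h⟩, rfl⟩

theorem lowDegree_mono {a b : ℕ} (h : a ≤ b) : lowDegree K ι a ≤ lowDegree K ι b :=
  span_le.2 <| by
    rintro _ ⟨T, rfl⟩
    exact boolMonomial_mem_lowDegree (T.2.trans h)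

theorem one_mem_lowDegree (d : ℕ) : (1 : (ι → Bool) → K) ∈ lowDegree K ι d := by
  convert boolMonomial_mem_lowDegree (K := K) (T := (∅ : Finset ι)) (Nat.zero_le d)
  funext y
  simp [boolMonomial]

theorem lowDegree_mul_le (a b : ℕ) :
    lowDegree K ι a * lowDegree K ι b ≤ lowDegree K ι (a + b) := by
  classical
  rw [lowDegree, lowDegree, span_mul_span, span_le]
  rintro _ ⟨_, ⟨T, rfl⟩, _, ⟨U, rfl⟩, rfl⟩
  dsimp only
  rw [boolMonomial_mul]
  exact boolMonomial_mem_lowDegree ((card_union_le _ _).trans (add_le_add T.2 U.2))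

theorem prod_mem_lowDegree {α : Type*} {f : α → (ι → Bool) → K} {d : ℕ} {A : Finset α}
    (hf : ∀ a ∈ A, f a ∈ lowDegree K ι d) : ∏ a ∈ A, f a ∈ lowDegree K ι (#A * d) := by
  classical
  induction A using Finset.induction with
  | empty => exact one_mem_lowDegree _
  | insert a A ha ih =>
    rw [prod_insert ha, card_insert_of_notMem ha, add_one_mul, add_comm]
    exact lowDegree_mul_le _ _ <| mul_mem_mul (hf a (mem_insert_self a A))
      (ih fun b hb => hf b (mem_insert_of_mem hb))

end LowDegree

namespace BDTree

def indicator (K : Type*) [CommRing K] {s : ℕ} (tr : BDTree s) : (Fin s → Bool) → K :=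
  fun y => if tr.eval y then 1 else 0

theorem indicator_mem_lowDegree {K : Type*} [CommRing K] {s : ℕ} (tr : BDTree s) :
    tr.indicator K ∈ lowDegree K (Fin s) tr.depth := by
  induction tr with
  | leaf b =>
    cases b
    · exact (show (leaf false).indicator K = 0 from funext fun _ => rfl) ▸ zero_mem _
    · exact (show (leaf true).indicator K = 1 from funext fun _ => rfl) ▸ one_mem_lowDegree 0
  | node i t₀ t₁ ih₀ ih₁ =>
    have hsplit : (node i t₀ t₁).indicator K
        = t₀.indicator K + boolMonomial K {i} * (t₁.indicator K - t₀.indicator K) := by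
      funext y
      by_cases h : y i <;> simp [indicator, eval, boolMonomial, h]
    have hdiff : t₁.indicator K - t₀.indicator K ∈ lowDegree K (Fin s) (max t₀.depth t₁.depth) :=
      sub_mem (lowDegree_mono (le_max_right _ _) ih₁) (lowDegree_mono (le_max_left _ _) ih₀)
    rw [hsplit, depth, add_comm]
    refine add_mem (lowDegree_mono (by omega) ih₀) (lowDegree_mul_le _ _ (mul_mem_mul ?_ hdiff))
    exact boolMonomial_mem_lowDegree (by simp)

end BDTree

theorem deterministic_bitprobe_tradeoff (m n s t : ℕ)
    (x : {S : Finset (Fin m) // S.card ≤ n} → (Fin s → Bool))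
    (tree : Fin m → BDTree s)
    (hdepth : ∀ q, (tree q).depth ≤ t)
    (hcorrect : ∀ S : {S : Finset (Fin m) // S.card ≤ n}, ∀ q : Fin m,
      (tree q).eval (x S) = true ↔ q ∈ S.1) :
    ∑ i ∈ Finset.range (n + 1), m.choose i ≤ ∑ i ∈ Finset.range (n * t + 1), s.choose i := by
  classical
  let ρ := LinearMap.funLeft ℚ ℚ x
  let w (S : {S : Finset (Fin m) // #S ≤ n}) := ρ (∏ q ∈ S.1, (tree q).indicator ℚ)
  have hw : ∀ S S', w S S' = if S ≤ S' then 1 else 0 := by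
    intro S S'
    simp only [w, ρ, LinearMap.funLeft_apply, Finset.prod_apply, BDTree.indicator, hcorrect,
      prod_boole]
    rfl
  have hind : LinearIndependent ℚ w :=
    linearIndependent_of_triangular (fun S => by simp [hw]) (fun S S' h => by simpa [hw] using h)
  have hspan : ∀ S, w S ∈ span ℚ (Set.range
      (ρ ∘ fun T : {T : Finset (Fin s) // #T ≤ n * t} => boolMonomial ℚ T.1)) := by
    intro S
    rw [Set.range_comp, ← map_span]
    refine mem_map_of_mem (lowDegree_mono (Nat.mul_le_mul_right t S.2) ?_)
    exact prod_mem_lowDegree fun q _ => lowDegree_mono (hdepth q) (tree q).indicator_mem_lowDegree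
  simpa only [Fintype.card_finset_card_le, Fintype.card_fin] using
    hind.card_le_card_of_mem_span_range hspan
end

section
/- Suppose every matrix W_S (S ranging over subsets of size ≤ n of an m-set) can be written as W_S = ∑_{T ⊆ [s], |T| ≤ t} (−1)^{[x(S)]_T} A_T where the matrices A_T do not depend on S and [x]_T denotes the parity of the bits of x ∈ {0,1}^s indexed by T. Then the n-fold tensor powers W_S^{⊗n} all lie in a linear subspace of matrices of dimension at most ∑_{i=0}^{nt} binom(s,i). -/
open Finset

private def symmDiffFam {s n : ℕ} (f : Fin n → Finset (Fin s)) : Finset (Fin s) :=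
  Finset.univ.filter fun i => Odd ((Finset.univ.filter fun j => i ∈ f j).card)

private lemma card_symmDiffFam_le {s n t : ℕ} (f : Fin n → Finset (Fin s))
    (hf : ∀ j, (f j).card ≤ t) : (symmDiffFam f).card ≤ n * t := by
  have hsub : symmDiffFam f ⊆ Finset.univ.biUnion f := by
    intro i hi
    simp only [symmDiffFam, mem_filter, mem_univ, true_and] at hi
    rcases hi with ⟨k, hk⟩
    have : (Finset.univ.filter fun j => i ∈ f j).Nonempty := by
      rw [← card_pos, hk]; omega
    rcases this with ⟨j, hj⟩
    simp only [mem_filter] at hj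
    exact mem_biUnion.2 ⟨j, mem_univ _, hj.2⟩
  calc (symmDiffFam f).card ≤ (Finset.univ.biUnion f).card := card_le_card hsub
    _ ≤ ∑ j, (f j).card := card_biUnion_le
    _ ≤ ∑ _j : Fin n, t := sum_le_sum fun j _ => hf j
    _ = n * t := by simp [mul_comm]

private lemma count_card_le {s K : ℕ} :
    ((Finset.univ : Finset (Finset (Fin s))).filter fun T => T.card ≤ K).card
      = ∑ i ∈ Finset.range (K + 1), s.choose i := by
  have : ((Finset.univ : Finset (Finset (Fin s))).filter fun T => T.card ≤ K)
      = (Finset.range (K + 1)).biUnion fun i => Finset.powersetCard i Finset.univ := by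
    ext T
    simp only [mem_filter, mem_univ, true_and, mem_biUnion, mem_range, mem_powersetCard,
      subset_univ, true_and]
    constructor
    · intro h; exact ⟨T.card, by omega, rfl⟩
    · rintro ⟨i, hi, rfl⟩; omega
  rw [this, card_biUnion]
  · refine Finset.sum_congr rfl fun i _ => ?_
    rw [card_powersetCard, card_univ, Fintype.card_fin]
  · intro a _ b _ hab
    simp only [disjoint_left, mem_powersetCard]
    rintro T ⟨-, rfl⟩ ⟨-, h⟩
    exact hab h

private lemma parity_prod {s n : ℕ} (b : Fin s → Bool) (f : Fin n → Finset (Fin s)) :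
    ∏ j, (-1 : ℂ) ^ (∑ i ∈ f j, if b i then 1 else 0 : ℕ)
      = (-1 : ℂ) ^ (∑ i ∈ symmDiffFam f, if b i then 1 else 0 : ℕ) := by
  rw [Finset.prod_pow_eq_pow_sum]
  rw [neg_one_pow_eq_pow_mod_two, neg_one_pow_eq_pow_mod_two (n := ∑ i ∈ symmDiffFam f, _)]
  congr 1
  have : ((∑ j, ∑ i ∈ f j, if b i then 1 else 0 : ℕ) : ZMod 2)
      = ((∑ i ∈ symmDiffFam f, if b i then 1 else 0 : ℕ) : ZMod 2) := by
    push_cast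
    have h1 : ∀ j : Fin n, (∑ i ∈ f j, (if b i then (1 : ZMod 2) else 0))
        = ∑ i : Fin s, if i ∈ f j then (if b i then (1 : ZMod 2) else 0) else 0 := by
      intro j; rw [Fintype.sum_ite_mem]
    simp_rw [h1]
    rw [Finset.sum_comm]
    have h2 : ∀ i : Fin s, (∑ j : Fin n, if i ∈ f j then (if b i then (1 : ZMod 2) else 0) else 0)
        = ((Finset.univ.filter fun j => i ∈ f j).card : ZMod 2) * (if b i then 1 else 0) := by
      intro i
      rw [← Finset.sum_filter, Finset.sum_const, nsmul_eq_mul]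
    simp_rw [h2]
    rw [symmDiffFam, Finset.sum_filter]
    refine Finset.sum_congr rfl fun i _ => ?_
    by_cases h : Odd ((Finset.univ.filter fun j => i ∈ f j).card)
    · rw [if_pos h]
      have h1 : (((Finset.univ.filter fun j => i ∈ f j).card : ℕ) : ZMod 2)
          = ((1 : ℕ) : ZMod 2) := by
        rw [ZMod.natCast_eq_natCast_iff']
        simpa [Nat.odd_iff] using h
      rw [h1]; push_cast; rw [one_mul]
    · rw [if_neg h]
      have h1 : (((Finset.univ.filter fun j => i ∈ f j).card : ℕ) : ZMod 2)
          = ((0 : ℕ) : ZMod 2) := by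
        rw [ZMod.natCast_eq_natCast_iff']
        simpa [Nat.even_iff] using Nat.not_odd_iff_even.mp h
      rw [h1]; push_cast; rw [zero_mul]
  rwa [ZMod.natCast_eq_natCast_iff'] at this

theorem tensor_powers_low_dimension
    {σ ι : Type*} (s t n : ℕ)
    (x : σ → (Fin s → Bool))
    (A : Finset (Fin s) → Matrix ι ι ℂ)
    (W : σ → Matrix ι ι ℂ)
    (hW : ∀ S : σ,
      W S = ∑ T ∈ Finset.univ.filter (fun T : Finset (Fin s) => T.card ≤ t),
        ((-1 : ℂ) ^ (∑ i ∈ T, if x S i then 1 else 0 : ℕ)) • A T) :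
    ∃ V : Submodule ℂ (Matrix (Fin n → ι) (Fin n → ι) ℂ),
      Module.rank ℂ V ≤ (∑ i ∈ Finset.range (n * t + 1), s.choose i : ℕ) ∧
      ∀ S : σ, (Matrix.of fun r c : Fin n → ι => ∏ j, W S (r j) (c j)) ∈ V := by
  classical
  set 𝒯 : Finset (Finset (Fin s)) := Finset.univ.filter (fun T => T.card ≤ t) with h𝒯
  set P : Finset (Fin n → Finset (Fin s)) := Fintype.piFinset (fun _ => 𝒯) with hP
  set B : Finset (Fin s) → Matrix (Fin n → ι) (Fin n → ι) ℂ := fun U =>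
    Matrix.of fun r c => ∑ f ∈ P.filter (fun f => symmDiffFam f = U),
      ∏ j, A (f j) (r j) (c j) with hB
  set 𝒰 : Finset (Finset (Fin s)) := Finset.univ.filter (fun U => U.card ≤ n * t) with h𝒰
  refine ⟨Submodule.span ℂ ((𝒰.image B : Finset _) : Set _), ?_, ?_⟩
  · calc Module.rank ℂ _ ≤ ((𝒰.image B).card : Cardinal) := rank_span_finset_le _
      _ ≤ (𝒰.card : Cardinal) := Nat.cast_le.2 Finset.card_image_le
      _ = _ := by rw [h𝒰, count_card_le]
  · intro S
    have hmaps : ∀ f ∈ P, symmDiffFam f ∈ 𝒰 := by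
      intro f hf
      rw [h𝒰, Finset.mem_filter]
      refine ⟨Finset.mem_univ _, card_symmDiffFam_le f fun j => ?_⟩
      have := Fintype.mem_piFinset.mp hf j
      rw [h𝒯, Finset.mem_filter] at this
      exact this.2
    have key : (Matrix.of fun r c : Fin n → ι => ∏ j, W S (r j) (c j))
        = ∑ U ∈ 𝒰, ((-1 : ℂ) ^ (∑ i ∈ U, if x S i then 1 else 0 : ℕ)) • B U := by
      ext r c
      have expand : ∀ j : Fin n, W S (r j) (c j)
          = ∑ T ∈ 𝒯, ((-1 : ℂ) ^ (∑ i ∈ T, if x S i then 1 else 0 : ℕ)) * A T (r j) (c j) := by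
        intro j
        rw [hW S]
        simp [Matrix.sum_apply]
      simp only [Matrix.of_apply, Matrix.sum_apply, Matrix.smul_apply, smul_eq_mul]
      simp_rw [expand]
      rw [Finset.prod_univ_sum]
      have step : ∀ f : Fin n → Finset (Fin s),
          (∏ j, ((-1 : ℂ) ^ (∑ i ∈ f j, if x S i then 1 else 0 : ℕ) * A (f j) (r j) (c j)))
          = ((-1 : ℂ) ^ (∑ i ∈ symmDiffFam f, if x S i then 1 else 0 : ℕ))
              * ∏ j, A (f j) (r j) (c j) := by
        intro f
        rw [Finset.prod_mul_distrib, parity_prod (x S) f]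
      simp_rw [step]
      rw [← Finset.sum_fiberwise_of_maps_to hmaps
        (fun f => ((-1 : ℂ) ^ (∑ i ∈ symmDiffFam f, if x S i then 1 else 0 : ℕ))
          * ∏ j, A (f j) (r j) (c j))]
      refine Finset.sum_congr rfl fun U hU => ?_
      rw [hB]
      simp only [Matrix.of_apply]
      rw [Finset.mul_sum]
      refine Finset.sum_congr rfl fun f hf => ?_
      rw [(Finset.mem_filter.mp hf).2]
    rw [key]
    exact Submodule.sum_mem _ fun U hU => Submodule.smul_mem _ _
      (Submodule.subset_span (by exact_mod_cast Finset.mem_image_of_mem B hU))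
end
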